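/- arXiv:2309.04449 — 2 statements merged into one kernel-verified Lean document; each statement's English description precedes it below -/
import Mathlib

section
/- Derivative of symmetric powers of a fundamental matrix: if Y(t) is a square matrix of differentiable functions satisfying Y' = A·Y, then the k-th symmetric power satisfies (Sym^k Y)' = k · (A ⊙ Id^{⊙(k-1)}) · Sym^k Y, where A ⊙ Id^{⊙(k-1)} is the endomorphism of Sym^k(K^n) given on decomposable elements by (A ⊙ Id^{⊙(k-1)})(v_1⊙···⊙v_k) = (1/k) Σ_{i=1}^{k} (A v_i) ⊙ v_1 ⊙···⊙ \hat{v_i} ⊙···⊙ v_k. -/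
/-!
Since each `symMap (Y s)` is an algebra homomorphism, the coefficientwise derivative of
`s ↦ symMap (Y s) p` obeys the Leibniz rule in `p`, exactly as the derivation `symDer (A t)`
does after `symMap (Y t)`. Both sides therefore agree on all polynomials once they agree on the
generators `Xᵢ`, where `Y' = AY` says precisely that they do.
-/

open MvPolynomial

/-- The symmetric power of a matrix `A`, modelled as the degree-preserving algebra
endomorphism of the symmetric algebra `Sym(ℝⁿ) ≅ ℝ[X₁,…,Xₙ]` sending
`Xᵢ = eᵢ ↦ A eᵢ = Σⱼ Aⱼᵢ Xⱼ`; its restriction to degree `k` is `Sym^k A`. -/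
noncomputable def symMap {n : ℕ} (A : Matrix (Fin n) (Fin n) ℝ) :
    MvPolynomial (Fin n) ℝ →ₐ[ℝ] MvPolynomial (Fin n) ℝ :=
  aeval fun i => ∑ j, C (A j i) * X j

/-- The operator `k · (A ⊙ Id^{⊙(k-1)})`, i.e. the unique derivation of the symmetric algebra
extending `A` in degree 1 (`Xᵢ ↦ Σⱼ Aⱼᵢ Xⱼ`). -/
noncomputable def symDer {n : ℕ} (A : Matrix (Fin n) (Fin n) ℝ) :
    Derivation ℝ (MvPolynomial (Fin n) ℝ) (MvPolynomial (Fin n) ℝ) :=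
  mkDerivation ℝ fun i => ∑ j, C (A j i) * X j

namespace MvPolynomial

variable {𝕜 σ : Type*} [NontriviallyNormedField 𝕜] {t : 𝕜}

theorem hasDerivAt_coeff_mul {f g : 𝕜 → MvPolynomial σ 𝕜} {f' g' : MvPolynomial σ 𝕜}
    (hf : ∀ m, HasDerivAt (fun s => coeff m (f s)) (coeff m f') t)
    (hg : ∀ m, HasDerivAt (fun s => coeff m (g s)) (coeff m g') t) (m : σ →₀ ℕ) :
    HasDerivAt (fun s => coeff m (f s * g s)) (coeff m (f' * g t + f t * g')) t := by
  classical
  simp only [coeff_mul, coeff_add, ← Finset.sum_add_distrib]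
  exact HasDerivAt.fun_sum fun x _ => (hf x.1).mul (hg x.2)

theorem hasDerivAt_coeff_algHom {φ : 𝕜 → MvPolynomial σ 𝕜 →ₐ[𝕜] MvPolynomial σ 𝕜}
    (D : Derivation 𝕜 (MvPolynomial σ 𝕜) (MvPolynomial σ 𝕜))
    (hX : ∀ i m, HasDerivAt (fun s => coeff m (φ s (X i))) (coeff m (D (φ t (X i)))) t)
    (p : MvPolynomial σ 𝕜) (m : σ →₀ ℕ) :
    HasDerivAt (fun s => coeff m (φ s p)) (coeff m (D (φ t p))) t := by
  induction p using MvPolynomial.induction_on generalizing m with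
  | C a => simpa using hasDerivAt_const t (coeff m (C a : MvPolynomial σ 𝕜))
  | add p q hp hq => simpa only [map_add, coeff_add] using (hp m).fun_add (hq m)
  | mul_X p i hp =>
    simpa only [map_mul, Derivation.leibniz, smul_eq_mul, add_comm, mul_comm]
      using hasDerivAt_coeff_mul hp (hX i) m

end MvPolynomial

section

variable {n : ℕ}

theorem symDer_symMap_X (A B : Matrix (Fin n) (Fin n) ℝ) (i : Fin n) :
    symDer A (symMap B (X i)) = symMap (A * B) (X i) := by
  simp only [symMap, symDer, aeval_X, map_sum, Derivation.leibniz, mkDerivation_X, derivation_C,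
    smul_eq_mul, mul_zero, add_zero, Finset.mul_sum, Matrix.mul_apply, C_mul, Finset.sum_mul,
    mul_assoc]
  rw [Finset.sum_comm]
  simp only [mul_left_comm]

theorem coeff_symMap_X (B : Matrix (Fin n) (Fin n) ℝ) (i : Fin n) (m : Fin n →₀ ℕ) :
    coeff m (symMap B (X i)) = ∑ j, B j i * coeff m (X j : MvPolynomial (Fin n) ℝ) := by
  simp [symMap, coeff_sum, coeff_C_mul]

end

theorem symPow_deriv_general {n : ℕ} (Y A : ℝ → Matrix (Fin n) (Fin n) ℝ)
    (hY : ∀ t i j, HasDerivAt (fun s => Y s i j) ((A t * Y t) i j) t)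
    (p : MvPolynomial (Fin n) ℝ)
    (t : ℝ) (m : (Fin n) →₀ ℕ) :
    HasDerivAt (fun s => coeff m (symMap (Y s) p))
      (coeff m (symDer (A t) (symMap (Y t) p))) t := by
  refine hasDerivAt_coeff_algHom (φ := fun s => symMap (Y s)) _ (fun i m => ?_) p m
  simp only [symDer_symMap_X, coeff_symMap_X]
  exact HasDerivAt.fun_sum fun j _ => (hY t j i).mul_const _

/-- Derivative of symmetric powers of a fundamental matrix: if `Y' = A·Y`, then the
`k`-th symmetric power satisfies `(Sym^k Y)' = k (A ⊙ Id^{⊙(k-1)}) · Sym^k Y`, where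
`k (A ⊙ Id^{⊙(k-1)})` is the derivation extending `A` in degree 1 (stated entrywise,
i.e. coefficientwise on each homogeneous `p` of degree `k`). -/
theorem symPow_deriv {n : ℕ} (k : ℕ) (Y A : ℝ → Matrix (Fin n) (Fin n) ℝ)
    (hY : ∀ t i j, HasDerivAt (fun s => Y s i j) ((A t * Y t) i j) t)
    (p : MvPolynomial (Fin n) ℝ) (hp : p.IsHomogeneous k)
    (t : ℝ) (m : (Fin n) →₀ ℕ) :
    HasDerivAt (fun s => coeff m (symMap (Y s) p))
      (coeff m (symDer (A t) (symMap (Y t) p))) t :=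
  symPow_deriv_general Y A hY p t m
end

section
/- The function f(x,y) = x·sin(y)^{α/(1−α)} − (α/(α−1))·cos(y)·₂F₁(1/2, 1 + α/(2(α−1)); 3/2; cos²(y)) is a first integral of the system x' = αx(1 − x cos y), y' = −(α−1) x sin y; that is, αx(1 − x cos y)·∂f/∂x − (α−1)x sin(y)·∂f/∂y = 0 on the domain where sin y > 0 and α ≠ 1. -/
open Real

/-- The Gaussian hypergeometric function `₂F₁(a,b;c;z) = Σₖ (a)ₖ(b)ₖ/((c)ₖ k!) zᵏ`. -/
noncomputable def gauss2F1 (a b c z : ℝ) : ℝ :=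
  ∑' k : ℕ,
    ((ascPochhammer ℝ k).eval a * (ascPochhammer ℝ k).eval b /
      ((ascPochhammer ℝ k).eval c * (Nat.factorial k))) * z ^ k

/-- The first integral of the transformed Dixon system found in the paper:
`f(x,y) = x sin(y)^{α/(1−α)} − (α/(α−1)) cos(y) ₂F₁(1/2, 1+α/(2(α−1)); 3/2; cos² y)`. -/
noncomputable def dixonF (α x y : ℝ) : ℝ :=
  x * sin y ^ (α / (1 - α)) -
    (α / (α - 1)) * cos y *
      gauss2F1 (1 / 2) (1 + α / (2 * (α - 1))) (3 / 2) (cos y ^ 2)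

/-!
The coefficient of `w ^ (2k+1)` in `w · ₂F₁(1/2, b; 3/2; w²)` is `(b)ₖ / (k! (2k+1))`, so
differentiating termwise gives the binomial series `∑ (b)ₖ / k! · w ^ 2k = (1 - w²) ^ (-b)`.
With `w = cos y` and `b = 1 + α / (2(α - 1))` this makes `∂f/∂y` a multiple of
`sin y ^ (α / (1 - α) - 1)`, while `∂f/∂x = sin y ^ (α / (1 - α))`; the first-integral identity
then reduces to `(α - 1) · α / (1 - α) = -α`.
-/

open scoped Nat

lemma ascPochhammer_eval_div_factorial_eq_choose (b : ℝ) (k : ℕ) :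
    (ascPochhammer ℝ k).eval b / k ! = Ring.choose (b + k - 1) k := by
  rw [← Ring.multichoose_eq, div_eq_iff (by positivity), mul_comm, ← nsmul_eq_mul,
    Ring.factorial_nsmul_multichoose_eq_ascPochhammer, Polynomial.ascPochhammer_smeval_eq_eval]

lemma hasSum_choose_mul_pow (b : ℝ) {z : ℝ} (hz : |z| < 1) :
    HasSum (fun k : ℕ => Ring.choose (b + k - 1) k * z ^ k) ((1 - z) ^ (-b)) := by
  have h := (one_div_one_sub_rpow_hasFPowerSeriesOnBall_zero b).hasSum (y := z)
    (by simpa [Metric.mem_eball, edist_dist] using hz)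
  simpa [FormalMultilinearSeries.ofScalars_apply_eq, mul_comm,
    rpow_neg (sub_nonneg.2 (abs_lt.1 hz).2.le)] using h

lemma summable_abs_choose_mul_pow (b : ℝ) {r : ℝ} (hr0 : 0 ≤ r) (hr : r < 1) :
    Summable (fun k : ℕ => |Ring.choose (b + k - 1) k| * r ^ k) := by
  have h := FormalMultilinearSeries.summable_norm_mul_pow
    (FormalMultilinearSeries.ofScalars ℝ fun n : ℕ => Ring.choose (b + n - 1) n) (r := r.toNNReal)
    (lt_of_lt_of_le (by simpa using hr) (one_div_one_sub_rpow_hasFPowerSeriesOnBall_zero b).r_le)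
  simpa [FormalMultilinearSeries.ofScalars_norm, Real.coe_toNNReal _ hr0] using h

lemma ascPochhammer_eval_add_one_mul {S : Type*} [CommSemiring S] (x : S) (n : ℕ) :
    (ascPochhammer S n).eval (x + 1) * x = (ascPochhammer S n).eval x * (x + n) := by
  rw [← ascPochhammer_succ_eval, ascPochhammer_succ_left, Polynomial.eval_mul,
    Polynomial.eval_comp]
  simp [mul_comm]

lemma gauss2F1_coeff_half_threeHalves (b : ℝ) (k : ℕ) :
    (ascPochhammer ℝ k).eval (1 / 2) * (ascPochhammer ℝ k).eval b /
        ((ascPochhammer ℝ k).eval (3 / 2) * k !) =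
      Ring.choose (b + k - 1) k / (2 * k + 1) := by
  have h3 : (ascPochhammer ℝ k).eval (3 / 2) = (2 * k + 1) * (ascPochhammer ℝ k).eval (1 / 2) := by
    have := ascPochhammer_eval_add_one_mul (1 / 2 : ℝ) k
    norm_num at this
    linarith
  have hpos := (ascPochhammer_pos k (1 / 2 : ℝ) (by norm_num)).ne'
  rw [← ascPochhammer_eval_div_factorial_eq_choose, h3]
  field_simp

lemma mul_gauss2F1_half_threeHalves_sq_eq_tsum (b w : ℝ) :
    w * gauss2F1 (1 / 2) b (3 / 2) (w ^ 2) =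
      ∑' k : ℕ, Ring.choose (b + k - 1) k / (2 * k + 1) * w ^ (2 * k + 1) := by
  rw [gauss2F1, ← tsum_mul_left]
  congr 1 with k
  rw [gauss2F1_coeff_half_threeHalves, ← pow_mul, pow_succ]
  ring

theorem hasDerivAt_mul_gauss2F1_half_threeHalves_sq (b : ℝ) {w : ℝ} (hw : |w| < 1) :
    HasDerivAt (fun w => w * gauss2F1 (1 / 2) b (3 / 2) (w ^ 2)) ((1 - w ^ 2) ^ (-b)) w := by
  set r := (|w| + 1) / 2 with hr
  have hr0 : 0 < r := by positivity
  have hwr : |w| < r := by linarith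
  have hr1 : r ^ 2 < 1 := by rw [sq_lt_one_iff₀ hr0.le]; linarith
  have hw2 : |w ^ 2| < 1 := by rw [abs_pow, sq_lt_one_iff₀ (abs_nonneg w)]; exact hw
  simp only [mul_gauss2F1_half_threeHalves_sq_eq_tsum]
  rw [← (hasSum_choose_mul_pow b hw2).tsum_eq]
  -- on `ball 0 r` the differentiated series is dominated by the binomial series at `r ^ 2`
  refine hasDerivAt_tsum_of_isPreconnected
    (u := fun k : ℕ => |Ring.choose (b + k - 1) k| * (r ^ 2) ^ k)
    (g' := fun (k : ℕ) (w : ℝ) => Ring.choose (b + k - 1) k * (w ^ 2) ^ k)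
    (summable_abs_choose_mul_pow b (by positivity) hr1) Metric.isOpen_ball
    (convex_ball 0 r).isPreconnected (fun k w _ => ?_) (fun k w hw => ?_)
    (Metric.mem_ball_self hr0) (by simp) (by simpa using hwr)
  · refine ((hasDerivAt_pow (2 * k + 1) w).const_mul
      (Ring.choose (b + k - 1) k / (2 * k + 1))).congr_deriv ?_
    rw [Nat.add_sub_cancel, pow_mul]
    push_cast
    field_simp
  · rw [mem_ball_zero_iff, norm_eq_abs] at hw
    rw [norm_mul, norm_pow, norm_pow, norm_eq_abs, norm_eq_abs]
    gcongr

lemma hasDerivAt_dixonF_left (α x y : ℝ) :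
    HasDerivAt (fun x' => dixonF α x' y) (sin y ^ (α / (1 - α))) x := by
  simpa [dixonF] using ((hasDerivAt_id x).mul_const (sin y ^ (α / (1 - α)))).sub_const
    (α / (α - 1) * cos y * gauss2F1 (1 / 2) (1 + α / (2 * (α - 1))) (3 / 2) (cos y ^ 2))

lemma hasDerivAt_dixonF_right (α x y : ℝ) (hy : 0 < sin y) :
    HasDerivAt (fun y' => dixonF α x y')
      ((x * (α / (1 - α)) * cos y + α / (α - 1)) * sin y ^ (α / (1 - α) - 1)) y := by
  have hcos : |cos y| < 1 := by
    rw [← sq_lt_one_iff₀ (abs_nonneg _), sq_abs]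
    nlinarith [sin_sq_add_cos_sq y]
  have hsin : HasDerivAt (fun y' => sin y' ^ (α / (1 - α)))
      (α / (1 - α) * sin y ^ (α / (1 - α) - 1) * cos y) y :=
    (hasDerivAt_rpow_const (Or.inl hy.ne')).comp y (hasDerivAt_sin y)
  have hG := (hasDerivAt_mul_gauss2F1_half_threeHalves_sq (1 + α / (2 * (α - 1))) hcos).comp y
    (hasDerivAt_cos y)
  have hexp_eq : 2 * -(1 + α / (2 * (α - 1))) + 1 = α / (1 - α) - 1 := by
    rw [← neg_sub 1 α, mul_comm 2, ← div_div, div_neg]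
    ring
  have hexp : (1 - cos y ^ 2) ^ (-(1 + α / (2 * (α - 1)))) * sin y = sin y ^ (α / (1 - α) - 1) := by
    rw [← sin_sq, ← rpow_natCast, ← rpow_mul hy.le, ← rpow_add_one hy.ne', Nat.cast_ofNat,
      hexp_eq]
  have h := (hsin.const_mul x).sub (hG.const_mul (α / (α - 1)))
  refine (h.congr_deriv ?_).congr_of_eventuallyEq (.of_forall fun y' => ?_)
  · rw [← hexp]
    ring
  · simp only [dixonF, Pi.sub_apply, Function.comp_apply]
    ring

/-- `dixonF` is a first integral of `x' = αx(1 − x cos y)`, `y' = −(α−1)x sin y`: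
its derivative along the vector field vanishes wherever `sin y > 0` and `α ≠ 1`. -/
theorem dixonF_first_integral (α : ℝ) (hα : α ≠ 1) (x y : ℝ) (hy : 0 < sin y) :
    α * x * (1 - x * cos y) * deriv (fun x' => dixonF α x' y) x -
      (α - 1) * x * sin y * deriv (fun y' => dixonF α x y') y = 0 := by
  have h₁ : α - 1 ≠ 0 := sub_ne_zero.2 hα
  have h₂ : 1 - α ≠ 0 := sub_ne_zero.2 hα.symm
  rw [(hasDerivAt_dixonF_left α x y).deriv, (hasDerivAt_dixonF_right α x y hy).deriv,
    rpow_sub_one hy.ne']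
  field_simp
  ring
end
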